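/- Let G = Cay(Γ, H) be a Cayley digraph on n vertices with |H| = h and girth m (minimum length of a directed cycle), and set the activation threshold t = h. If s > n − m, then the higher diameter satisfies d_{st}(G) = n − s; if s ≤ n − m and a minimum-length directed cycle exists, then d_{st}(G) = ∞ (some s-subset fails to synchronize G). -/

import Mathlib

open Finset

-- One step of the activation process: a vertex becomes active
-- if at least `t` of its in-neighbors are active.
open Classical in
noncomputable def actStep {V : Type*} [Fintype V] (E : V → V → Prop) (t : ℕ)
    (S : Finset V) : Finset V :=
  S ∪ Finset.univ.filter (fun v => t ≤ (S.filter (fun u => E u v)).card)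

/-- `activeSets E t S i` is the set of active vertices after `i` steps. -/
noncomputable def activeSets {V : Type*} [Fintype V] (E : V → V → Prop) (t : ℕ)
    (S : Finset V) (i : ℕ) : Finset V :=
  (actStep E t)^[i] S

-- The least number of steps needed to activate all vertices (`⊤` if never).
open Classical in
noncomputable def syncTime {V : Type*} [Fintype V] (E : V → V → Prop) (t : ℕ)
    (S : Finset V) : ℕ∞ :=
  if h : ∃ i, activeSets E t S i = Finset.univ then (Nat.find h : ℕ∞) else ⊤

/-- The higher diameter `d_{st}`: the max of `syncTime` over all `s`-subsets. -/
noncomputable def higherDiam {V : Type*} [Fintype V] (E : V → V → Prop) (t s : ℕ) : ℕ∞ :=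
  ⨆ S : {S : Finset V // S.card = s}, syncTime E t S.1

/-- There is a directed cycle of length `m` in the digraph `E`, all of whose
vertices lie in `T`. -/
def cycleIn {V : Type*} (E : V → V → Prop) (T : Set V) (m : ℕ) : Prop :=
  0 < m ∧ ∃ c : ZMod m → V, Function.Injective c ∧ (∀ i, c i ∈ T) ∧
    ∀ i, E (c i) (c (i + 1))

/-- There is a directed cycle of length `m` in the digraph `E`. -/
def hasCycle {V : Type*} (E : V → V → Prop) (m : ℕ) : Prop :=
  0 < m ∧ ∃ c : ZMod m → V, Function.Injective c ∧ ∀ i, E (c i) (c (i + 1))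

/-!
With threshold equal to the in-degree, a vertex activates exactly when all its in-neighbours are
active. So a set of vertices each having an in-neighbour inside the set never activates; in
particular a cycle avoided by `S` stays inactive forever. Conversely, if fewer than `m` vertices
are inactive, the inactive set contains no cycle, hence is not closed under taking
in-neighbours, and at least one vertex activates per step: `n - s` steps suffice. They are
needed for `S = Γ \ {h, h², …, hᵏ}` with `h ∈ H` and `k = n - s`, since `hⁱ` waits for `hⁱ⁻¹`.
-/

open Function

section Digraph

variable {V W : Type*} {E : V → V → Prop} {l : ℕ}

theorem hasCycle.map {F : W → W → Prop} {φ : V → W} (hφ : Injective φ)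
    (hEF : ∀ a b, E a b → F (φ a) (φ b)) (h : hasCycle E l) : hasCycle F l :=
  let ⟨hl, c, hc, hE⟩ := h
  ⟨hl, φ ∘ c, hφ.comp hc, fun i => hEF _ _ (hE i)⟩

theorem hasCycle.of_flip (h : hasCycle (flip E) l) : hasCycle E l := by
  obtain ⟨hl, c, hc, hE⟩ := h
  refine ⟨hl, c ∘ Neg.neg, hc.comp neg_injective, fun i => ?_⟩
  have hi : -(i + 1) + 1 = -i := by ring
  simpa only [flip, hi, comp_apply] using hE (-(i + 1))

theorem hasCycle_minimalPeriod {f : V → V} {x : V} (hx : x ∈ periodicPts f)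
    (hf : ∀ n, E (f^[n] x) (f^[n + 1] x)) : hasCycle E (minimalPeriod f x) := by
  have hp : 0 < minimalPeriod f x := minimalPeriod_pos_of_mem_periodicPts hx
  have : NeZero (minimalPeriod f x) := ⟨hp.ne'⟩
  refine ⟨hp, fun i => f^[i.val] x, fun i j hij => ZMod.val_injective _
    (iterate_injOn_Iio_minimalPeriod (ZMod.val_lt i) (ZMod.val_lt j) hij), fun i => ?_⟩
  have hsucc : (i + 1 : ZMod (minimalPeriod f x)) = ((i.val + 1 : ℕ) : ZMod _) := by simp
  simp only [hsucc, ZMod.val_natCast]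
  rw [iterate_mod_minimalPeriod_eq]
  exact hf i.val

/-- The in-neighbour map `g` has a periodic point, whose orbit is a cycle traversed backwards. -/
theorem exists_hasCycle_of_forall_exists_rel [Fintype V] [Nonempty V] (h : ∀ v, ∃ u, E u v) :
    ∃ l ≤ Fintype.card V, hasCycle E l := by
  choose g hg using h
  obtain ⟨a, b, hab, heq⟩ := Finite.exists_ne_map_eq_of_infinite (g^[·] (Classical.arbitrary V))
  wlog hlt : a < b generalizing a b
  · exact this b a hab.symm heq.symm (by omega)
  have hper : g^[a] (Classical.arbitrary V) ∈ periodicPts g := by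
    refine mk_mem_periodicPts (n := b - a) (by omega) ?_
    rw [IsPeriodicPt, IsFixedPt, ← iterate_add_apply, Nat.sub_add_cancel hlt.le]
    exact heq.symm
  refine ⟨_, minimalPeriod_le_card, (hasCycle_minimalPeriod hper fun n => ?_).of_flip⟩
  rw [iterate_succ_apply']
  exact hg _

theorem exists_hasCycle_of_forall_mem_exists_mem {T : Finset V} (hT : T.Nonempty)
    (h : ∀ v ∈ T, ∃ u ∈ T, E u v) : ∃ l ≤ T.card, hasCycle E l := by
  have : Nonempty T := hT.to_subtype
  obtain ⟨l, hl, hcyc⟩ := exists_hasCycle_of_forall_exists_rel (E := fun a b : T => E a b)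
    fun v => let ⟨u, hu, huv⟩ := h v v.2; ⟨⟨u, hu⟩, huv⟩
  exact ⟨l, by simpa using hl, hcyc.map Subtype.val_injective fun _ _ => id⟩

end Digraph

section Activation

variable {V : Type*} [Fintype V] {E : V → V → Prop} {t : ℕ}

theorem mem_actStep_iff (hdeg : ∀ v, {u | E u v}.ncard = t) {S : Finset V} {v : V} :
    v ∈ actStep E t S ↔ v ∈ S ∨ ∀ u, E u v → u ∈ S := by
  classical
  have hin : ∀ v, (univ.filter (E · v)).card = t := fun v => by
    rw [← hdeg v, ← Set.ncard_coe_finset]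
    simp
  have hsub : S.filter (E · v) ⊆ univ.filter (E · v) := filter_subset_filter _ (subset_univ S)
  have hfull : t ≤ (S.filter (E · v)).card ↔ S.filter (E · v) = univ.filter (E · v) :=
    ⟨fun hle => eq_of_subset_of_card_le hsub (hin v ▸ hle), fun heq => (heq ▸ hin v).ge⟩
  simp only [actStep, mem_union, mem_filter, mem_univ, true_and, hfull, Finset.ext_iff]
  grind

theorem activeSets_succ (S : Finset V) (j : ℕ) :
    activeSets E t S (j + 1) = actStep E t (activeSets E t S j) :=
  iterate_succ_apply' _ _ _

theorem le_syncTime {S : Finset V} {k : ℕ} (h : ∀ j < k, activeSets E t S j ≠ univ) :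
    (k : ℕ∞) ≤ syncTime E t S := by
  classical
  unfold syncTime
  split_ifs with hsync
  · exact_mod_cast (Nat.le_find_iff hsync k).mpr fun j hj => h j hj
  · exact le_top

theorem syncTime_le {S : Finset V} {k : ℕ} (h : activeSets E t S k = univ) :
    syncTime E t S ≤ k := by
  classical
  rw [syncTime, dif_pos ⟨k, h⟩]
  exact_mod_cast Nat.find_min' _ h

theorem syncTime_eq_top {S : Finset V} (h : ∀ j, activeSets E t S j ≠ univ) :
    syncTime E t S = ⊤ := by
  rw [syncTime, dif_neg (not_exists.mpr h)]

variable (hdeg : ∀ v, {u | E u v}.ncard = t)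
include hdeg

theorem notMem_activeSets_of_forall_exists_mem {T : Set V} (hT : ∀ v ∈ T, ∃ u ∈ T, E u v)
    {S : Finset V} (hST : ∀ v ∈ T, v ∉ S) (j : ℕ) : ∀ v ∈ T, v ∉ activeSets E t S j := by
  induction j with
  | zero => exact hST
  | succ j ih =>
    intro v hv hact
    rw [activeSets_succ, mem_actStep_iff hdeg] at hact
    obtain ⟨u, hu, huv⟩ := hT v hv
    rcases hact with hact | hall
    · exact ih v hv hact
    · exact ih u hu (hall u huv)

theorem notMem_activeSets_of_walk {w : ℕ → V} (hw : ∀ i, E (w i) (w (i + 1))) {k : ℕ}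
    {S : Finset V} (hS : ∀ i, 0 < i → i ≤ k → w i ∉ S) :
    ∀ j i, j < i → i ≤ k → w i ∉ activeSets E t S j := by
  intro j
  induction j with
  | zero => exact hS
  | succ j ih =>
    intro i hji hik hact
    rw [activeSets_succ, mem_actStep_iff hdeg] at hact
    rcases hact with hact | hall
    · exact ih i (by omega) hik hact
    · have hedge := hw (i - 1)
      rw [Nat.sub_add_cancel (by omega)] at hedge
      exact ih (i - 1) (by omega) (by omega) (hall _ hedge)

/-- The inactive set is shorter than every cycle, so it cannot be closed under taking
in-neighbours. -/
theorem ssubset_actStep {m : ℕ} (hmin : ∀ l, hasCycle E l → m ≤ l) {S : Finset V}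
    (hS : S ≠ univ) (hcard : Fintype.card V - S.card < m) : S ⊂ actStep E t S := by
  classical
  refine Finset.ssubset_iff_subset_ne.mpr ⟨subset_union_left, fun hfix => ?_⟩
  have hclosed : ∀ v ∈ Sᶜ, ∃ u ∈ Sᶜ, E u v := by
    intro v hv
    have hv' : v ∉ actStep E t S := hfix ▸ mem_compl.mp hv
    rw [mem_actStep_iff hdeg] at hv'
    push Not at hv'
    obtain ⟨u, huv, hu⟩ := hv'.2
    exact ⟨u, mem_compl.mpr hu, huv⟩
  have hne : Sᶜ.Nonempty := (compl_ne_univ_iff_nonempty Sᶜ).mp (by rwa [compl_compl])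
  obtain ⟨l, hl, hcyc⟩ := exists_hasCycle_of_forall_mem_exists_mem hne hclosed
  have := hmin l hcyc
  rw [card_compl] at hl
  omega

theorem activeSets_eq_univ {m : ℕ} (hmin : ∀ l, hasCycle E l → m ≤ l) (k : ℕ) :
    ∀ S : Finset V, Fintype.card V - S.card ≤ k → k < m → activeSets E t S k = univ := by
  induction k with
  | zero =>
    intro S hS _
    exact eq_univ_of_card S (le_antisymm (card_le_univ S) (by omega))
  | succ k ih =>
    intro S hS hkm
    by_cases huniv : S = univ
    · rw [huniv, activeSets]
      exact iterate_fixed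
        (eq_univ_of_forall fun v => (mem_actStep_iff hdeg).mpr (.inl (mem_univ v))) _
    · have hlt := card_lt_card (ssubset_actStep hdeg hmin huniv (by omega))
      rw [activeSets, iterate_succ_apply]
      exact ih _ (by omega) (by omega)

end Activation

theorem exists_card_eq_disjoint {V : Type*} [Fintype V] [DecidableEq V] (T : Finset V) {s : ℕ}
    (hs : T.card + s ≤ Fintype.card V) : ∃ S : Finset V, S.card = s ∧ ∀ v ∈ T, v ∉ S := by
  obtain ⟨S, hSsub, hScard⟩ :=
    exists_subset_card_eq (s := Tᶜ) (n := s) (by rw [card_compl]; omega)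
  exact ⟨S, hScard, fun v hvT hvS => mem_compl.mp (hSsub hvS) hvT⟩

section Cayley

variable {Γ : Type*} [Group Γ] {H : Finset Γ} {E : Γ → Γ → Prop}

theorem ncard_inNeighbors_cayley (hE : ∀ x y, E x y ↔ ∃ h ∈ H, y = h * x) (v : Γ) :
    {u | E u v}.ncard = H.card := by
  have hset : {u | E u v} = (fun h => h⁻¹ * v) '' H := by
    ext u
    simp only [Set.mem_ofPred_eq, hE, Set.mem_image, mem_coe, eq_inv_mul_iff_mul_eq, eq_comm]
  rw [hset, Set.ncard_image_of_injective _ fun a b hab => inv_injective (mul_right_cancel hab),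
    Set.ncard_coe_finset]

end Cayley

/-- For a Cayley digraph `G = Cay(Γ,H)` on `n` vertices with `|H| = h`, girth `m`
and threshold `t = h`: if `s > n - m` then `d_{st}(G) = n - s`; if `s ≤ n - m`
(and a minimum-length directed cycle exists) then `d_{st}(G) = ∞`. -/
theorem stmt_13 {Γ : Type*} [Group Γ] [Fintype Γ] [DecidableEq Γ] (H : Finset Γ)
    (E : Γ → Γ → Prop) (hE : ∀ x y, E x y ↔ ∃ h ∈ H, y = h * x) (m : ℕ)
    (hm : hasCycle E m) (hmin : ∀ l, hasCycle E l → m ≤ l) (s : ℕ) :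
    (Fintype.card Γ - m < s → s ≤ Fintype.card Γ →
      higherDiam E H.card s = ((Fintype.card Γ - s : ℕ) : ℕ∞)) ∧
    (s ≤ Fintype.card Γ - m → higherDiam E H.card s = ⊤) := by
  have hdeg := ncard_inNeighbors_cayley hE
  obtain ⟨hm0, c, hcinj, hcE⟩ := hm
  have : NeZero m := ⟨hm0.ne'⟩
  have hmn : m ≤ Fintype.card Γ := ZMod.card m ▸ Fintype.card_le_of_injective c hcinj
  constructor
  · intro hms hsn
    set k := Fintype.card Γ - s
    obtain ⟨h₀, hh₀, -⟩ := (hE _ _).mp (hcE 0)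
    have hwalk : ∀ i, E (h₀ ^ i) (h₀ ^ (i + 1)) :=
      fun i => (hE _ _).mpr ⟨h₀, hh₀, pow_succ' h₀ i⟩
    obtain ⟨S₀, hS₀, hdisj⟩ := exists_card_eq_disjoint ((Icc 1 k).image (h₀ ^ ·)) (s := s)
      (by have := (card_image_le (f := (h₀ ^ ·))).trans (Nat.card_Icc 1 k).le; omega)
    have hlower : (k : ℕ∞) ≤ syncTime E H.card S₀ := le_syncTime fun j hj hsync =>
      notMem_activeSets_of_walk hdeg hwalk
        (fun i hi hik => hdisj _ (mem_image_of_mem _ (mem_Icc.mpr ⟨hi, hik⟩))) j k hj le_rfl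
        (hsync ▸ mem_univ _)
    refine le_antisymm (iSup_le fun S => syncTime_le ?_) (le_iSup_of_le ⟨S₀, hS₀⟩ hlower)
    exact activeSets_eq_univ hdeg hmin k S.1 (by rw [S.2]) (by omega)
  · intro hsm
    obtain ⟨S, hS, hdisj⟩ := exists_card_eq_disjoint (univ.map ⟨c, hcinj⟩) (s := s)
      (by rw [card_map, card_univ, ZMod.card]; omega)
    have hcycle : ∀ v ∈ Set.range c, ∃ u ∈ Set.range c, E u v := by
      rintro _ ⟨i, rfl⟩
      exact ⟨c (i - 1), ⟨i - 1, rfl⟩, by simpa using hcE (i - 1)⟩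
    have hnever := notMem_activeSets_of_forall_exists_mem hdeg hcycle
      (by rintro _ ⟨i, rfl⟩; exact hdisj _ (by simp))
    refine top_le_iff.mp (le_iSup_of_le ⟨S, hS⟩ (syncTime_eq_top fun j hsync => ?_).ge)
    exact hnever j (c 0) ⟨0, rfl⟩ (hsync ▸ mem_univ _)
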